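/- arXiv:1504.04870 — 3 statements merged into one kernel-verified Lean document; each statement's English description precedes it below -/
import Mathlib

section
/- Consider a random walk in changing environment on the path graph ℕ (edges between consecutive integers), where at each time t the conductances C_t : ℕ → (0,∞) are ≥ those at time t-1 (monotone increasing, possibly adaptively depending on the walk's history), and C_t(j) ≤ C_∞(j) for all t, j, where the fixed graph with conductances C_∞ is recurrent, i.e. ∑_{j=0}^∞ 1/C_∞(j) = ∞. Then the walk visits 0 infinitely often almost surely (the walk is recurrent). -/
/-!
The resistance `H_t(x) = ∑_{j < x} 1 / C_t(j)` from `0` to `x` is harmonic away from `0` for the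
walk in the environment `C_t`, and it only decreases as the conductances grow. Hence
`min (H_t(X_t)) K`, stopped at the first visit to `0`, is a bounded supermartingale and converges
almost surely. A walk avoiding `0` cannot cross a fixed edge `(L, L + 1)` upwards infinitely often,
since each crossing raises the potential by at least `1 / C_∞(L)`; so it tends to infinity, where
`H_t(X_t) ≥ ∑_{j < X_t} 1 / C_∞(j) → ∞`. Fatou's lemma then gives
`K · P(X avoids 0) ≤ E[min (H_0(X_0)) K] = o(K)`. The hypotheses are invariant under time shifts,
so the walk returns to `0` after every time.
-/

open MeasureTheory Filter Topology

namespace RWCE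

noncomputable def resistance (c : ℕ → ℝ) (x : ℕ) : ℝ :=
  ∑ j ∈ Finset.range x, 1 / c j

section Resistance

variable {c d : ℕ → ℝ}

theorem resistance_succ (c : ℕ → ℝ) (x : ℕ) : resistance c (x + 1) = resistance c x + 1 / c x :=
  Finset.sum_range_succ _ x

theorem resistance_nonneg (hc : ∀ j, 0 ≤ c j) (x : ℕ) : 0 ≤ resistance c x :=
  Finset.sum_nonneg fun j _ => one_div_nonneg.mpr (hc j)

theorem resistance_mono (hc : ∀ j, 0 ≤ c j) : Monotone (resistance c) := fun _ _ hxy =>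
  Finset.sum_le_sum_of_subset_of_nonneg (Finset.range_mono hxy)
    fun j _ _ => one_div_nonneg.mpr (hc j)

theorem resistance_le_of_le (hc : ∀ j, 0 < c j) (hcd : ∀ j, c j ≤ d j) (x : ℕ) :
    resistance d x ≤ resistance c x :=
  Finset.sum_le_sum fun j _ => one_div_le_one_div_of_le (hc j) (hcd j)

theorem tendsto_resistance_atTop (hc : ∀ j, 0 ≤ c j) (h : ¬ Summable fun j => 1 / c j) :
    Tendsto (resistance c) atTop atTop :=
  (not_summable_iff_tendsto_nat_atTop_of_nonneg fun j => one_div_nonneg.mpr (hc j)).mp h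

theorem resistance_harmonic (hc : ∀ j, 0 < c j) {x : ℕ} (hx : x ≠ 0) :
    c x / (c x + c (x - 1)) * resistance c (x + 1)
      + (1 - c x / (c x + c (x - 1))) * resistance c (x - 1) = resistance c x := by
  obtain ⟨y, rfl⟩ := Nat.exists_eq_succ_of_ne_zero hx
  have h₁ := hc (y + 1)
  have h₀ := hc y
  simp only [Nat.succ_eq_add_one, add_tsub_cancel_right, resistance_succ]
  field_simp
  ring

end Resistance

theorem convex_comb_min_le {p a b K : ℝ} (hp₀ : 0 ≤ p) (hp₁ : p ≤ 1) :
    p * min a K + (1 - p) * min b K ≤ min (p * a + (1 - p) * b) K := by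
  have hq : 0 ≤ 1 - p := by linarith
  refine le_min ?_ ?_
  · gcongr <;> exact min_le_left _ _
  · calc p * min a K + (1 - p) * min b K ≤ p * K + (1 - p) * K := by
          gcongr <;> exact min_le_right _ _
      _ = K := by ring

theorem exists_frequently_eq_and_eventually_ge {u : ℕ → ℕ} (h : ¬ Tendsto u atTop atTop) :
    ∃ L, (∃ᶠ t in atTop, u t = L) ∧ ∀ᶠ t in atTop, L ≤ u t := by
  classical
  have hex : ∃ L, ∃ᶠ t in atTop, u t ≤ L := by
    rw [tendsto_atTop] at h
    push Not at h
    obtain ⟨b, hb⟩ := h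
    exact ⟨b, hb.mono fun t ht => ht.le⟩
  have hge : ∀ᶠ t in atTop, Nat.find hex ≤ u t := by
    rcases hL : Nat.find hex with _ | L
    · exact Eventually.of_forall fun t => Nat.zero_le _
    · have := Nat.find_min hex (show L < Nat.find hex by omega)
      rw [not_frequently] at this
      exact this.mono fun t ht => not_le.mp ht
  exact ⟨Nat.find hex, ((Nat.find_spec hex).and_eventually hge).mono
    fun t ht => le_antisymm ht.1 ht.2, hge⟩

theorem exists_frequently_step_up {x : ℕ → ℕ} (h : ¬ Tendsto x atTop atTop)
    (hstep : ∀ t, x (t + 1) = x t + 1 ∨ x (t + 1) + 1 = x t) :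
    ∃ L, ∃ᶠ t in atTop, x t = L ∧ x (t + 1) = L + 1 := by
  obtain ⟨L, hfreq, hge⟩ := exists_frequently_eq_and_eventually_ge h
  refine ⟨L, (hfreq.and_eventually ((tendsto_add_atTop_nat 1).eventually hge)).mono ?_⟩
  rintro t ⟨hxt, hxt'⟩
  refine ⟨hxt, ?_⟩
  rcases hstep t with h' | h' <;> omega

section Deterministic

variable {c : ℕ → ℕ → ℝ} {x : ℕ → ℕ}

theorem antitone_resistance (hpos : ∀ t j, 0 < c t j) (hmono : ∀ t j, c t j ≤ c (t + 1) j)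
    (y : ℕ) : Antitone fun t => resistance (c t) y :=
  antitone_nat_of_succ_le fun t => resistance_le_of_le (hpos t) (hmono t) y

/-- Since `resistance (c t) L` converges as `t → ∞`, each late upward crossing of `(L, L + 1)`
raises the capped potential by almost `1 / b`. -/
theorem not_tendsto_of_frequently_step_up (hpos : ∀ t j, 0 < c t j)
    (hmono : ∀ t j, c t j ≤ c (t + 1) j) {L : ℕ} {b K : ℝ} (hb : ∀ t, c t L ≤ b)
    (hK : resistance (c 0) (L + 1) ≤ K) (hup : ∃ᶠ t in atTop, x t = L ∧ x (t + 1) = L + 1)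
    (a : ℝ) : ¬ Tendsto (fun t => min (resistance (c t) (x t)) K) atTop (𝓝 a) := by
  intro ha
  have hanti := antitone_resistance hpos hmono
  have hδ : 0 < 1 / b := one_div_pos.mpr ((hpos 0 L).trans_le (hb 0))
  have hv : Tendsto (fun t => resistance (c t) L) atTop (𝓝 (⨅ t, resistance (c t) L)) :=
    tendsto_atTop_ciInf (hanti L)
      ⟨0, Set.forall_mem_range.2 fun t => resistance_nonneg (fun j => (hpos t j).le) L⟩
  have hjump : ∀ {w : ℕ → ℝ} {a : ℝ}, Tendsto w atTop (𝓝 a) →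
      ∀ᶠ t in atTop, |w (t + 1) - w t| < 1 / b / 2 := fun {w a} hw => by
    have h := (hw.comp (tendsto_add_atTop_nat 1)).sub hw
    rw [sub_self] at h
    exact (Metric.tendsto_nhds.mp h _ (half_pos hδ)).mono fun t ht => by
      simpa [Real.dist_eq] using ht
  obtain ⟨t, ⟨hxt, hxt'⟩, hg, hv'⟩ :=
    (hup.and_eventually ((hjump ha).and (hjump hv))).exists
  have hle : ∀ s, resistance (c s) (L + 1) ≤ K := fun s => (hanti (L + 1) (Nat.zero_le s)).trans hK
  have hvt : resistance (c t) L ≤ K :=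
    (resistance_mono (fun j => (hpos t j).le) L.le_succ).trans (hle t)
  have hcross : 1 / b ≤ 1 / c (t + 1) L := one_div_le_one_div_of_le (hpos _ L) (hb _)
  simp only [hxt, hxt'] at hg
  rw [min_eq_left hvt, min_eq_left (hle (t + 1)), resistance_succ] at hg
  rw [abs_lt] at hg hv'
  linarith [hg.2, hv'.1]

theorem tendsto_min_resistance_of_forall_exists_tendsto {cinf : ℕ → ℝ}
    (hpos : ∀ t j, 0 < c t j) (hmono : ∀ t j, c t j ≤ c (t + 1) j)
    (hbound : ∀ t j, c t j ≤ cinf j) (hrec : ¬ Summable fun j => 1 / cinf j)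
    (hstep : ∀ t, x (t + 1) = x t + 1 ∨ x (t + 1) + 1 = x t)
    (hconv : ∀ K : ℕ, ∃ a, Tendsto (fun t => min (resistance (c t) (x t)) K) atTop (𝓝 a))
    (K : ℕ) : Tendsto (fun t => min (resistance (c t) (x t)) K) atTop (𝓝 K) := by
  by_cases hx : Tendsto x atTop atTop
  · have hR : Tendsto (fun t => resistance (c t) (x t)) atTop atTop :=
      tendsto_atTop_mono (fun t => resistance_le_of_le (hpos t) (hbound t) (x t))
        ((tendsto_resistance_atTop (fun j => (hpos 0 j).le.trans (hbound 0 j)) hrec).comp hx)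
    exact tendsto_const_nhds.congr'
      ((hR.eventually_ge_atTop K).mono fun t ht => (min_eq_right ht).symm)
  · obtain ⟨L, hup⟩ := exists_frequently_step_up hx hstep
    obtain ⟨K', hK'⟩ := exists_nat_ge (resistance (c 0) (L + 1))
    obtain ⟨a, ha⟩ := hconv K'
    exact absurd ha (not_tendsto_of_frequently_step_up hpos hmono (hbound · L) hK' hup a)

end Deterministic

variable {Ω : Type*} {m0 : MeasurableSpace Ω} {μ : Measure Ω} {𝓕 : Filtration ℕ m0}

section Stopping

variable {f : ℕ → Ω → ℝ} {A : ℕ → Set Ω}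

open scoped Classical in
/-- The process `f` frozen at its value at the first time `n` with `ω ∉ A n`. -/
noncomputable def stopOnExit (f : ℕ → Ω → ℝ) (A : ℕ → Set Ω) : ℕ → Ω → ℝ
  | 0 => f 0
  | n + 1 => fun ω => if ω ∈ A n then f (n + 1) ω else stopOnExit f A n ω

theorem stopOnExit_succ (n : ℕ) :
    stopOnExit f A (n + 1) = (A n).indicator (f (n + 1)) + (A n)ᶜ.indicator (stopOnExit f A n) := by
  ext ω
  by_cases h : ω ∈ A n <;> simp [stopOnExit, h]

theorem stopOnExit_eq_of_mem (hA : Antitone A) {n : ℕ} {ω : Ω} (h : ω ∈ A n) :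
    stopOnExit f A n ω = f n ω := by
  cases n with
  | zero => rfl
  | succ n => simp [stopOnExit, hA n.le_succ h]

theorem stopOnExit_mem {S : Set ℝ} {ω : Ω} (h : ∀ n, f n ω ∈ S) (n : ℕ) :
    stopOnExit f A n ω ∈ S := by
  induction n with
  | zero => exact h 0
  | succ n ih => by_cases hn : ω ∈ A n <;> simp [stopOnExit, hn, h, ih]

theorem measurable_stopOnExit (hf : ∀ n, Measurable[𝓕 n] (f n))
    (hA : ∀ n, MeasurableSet[𝓕 n] (A n)) (n : ℕ) : Measurable[𝓕 n] (stopOnExit f A n) := by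
  induction n with
  | zero => exact hf 0
  | succ n ih =>
    exact Measurable.ite (𝓕.mono n.le_succ _ (hA n)) (hf (n + 1))
      (ih.mono (𝓕.mono n.le_succ) le_rfl)

theorem integrable_stopOnExit (hf : ∀ n, Integrable (f n) μ) (hA : ∀ n, MeasurableSet (A n))
    (n : ℕ) : Integrable (stopOnExit f A n) μ := by
  induction n with
  | zero => exact hf 0
  | succ n ih =>
    rw [stopOnExit_succ]
    exact ((hf (n + 1)).indicator (hA n)).add (ih.indicator (hA n).compl)

theorem supermartingale_stopOnExit [IsFiniteMeasure μ] (hf : ∀ n, Measurable[𝓕 n] (f n))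
    (hfi : ∀ n, Integrable (f n) μ) (hA : ∀ n, MeasurableSet[𝓕 n] (A n)) (hanti : Antitone A)
    (hsuper : ∀ n, ∀ᵐ ω ∂μ, ω ∈ A n → μ[f (n + 1) | 𝓕 n] ω ≤ f n ω) :
    Supermartingale (stopOnExit f A) 𝓕 μ := by
  have hAm : ∀ n, MeasurableSet (A n) := fun n => 𝓕.le n _ (hA n)
  have hgm := measurable_stopOnExit hf hA
  have hgi := integrable_stopOnExit hfi hAm
  refine supermartingale_nat (fun n => (hgm n).stronglyMeasurable) hgi fun n => ?_
  have hcond : μ[stopOnExit f A (n + 1) | 𝓕 n]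
      =ᵐ[μ] (A n).indicator (μ[f (n + 1) | 𝓕 n]) + (A n)ᶜ.indicator (stopOnExit f A n) := by
    rw [stopOnExit_succ]
    refine (condExp_add ((hfi _).indicator (hAm n)) ((hgi n).indicator (hAm n).compl) _).trans
      (EventuallyEq.add (condExp_indicator (hfi _) (hA n)) (EventuallyEq.of_eq ?_))
    exact condExp_of_stronglyMeasurable (𝓕.le n)
      (((hgm n).indicator (hA n).compl).stronglyMeasurable) ((hgi n).indicator (hAm n).compl)
  filter_upwards [hcond, hsuper n] with ω hω hωA
  by_cases h : ω ∈ A n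
  · simpa [hω, h, stopOnExit_eq_of_mem hanti h] using hωA h
  · simp [hω, h]

theorem _root_.MeasureTheory.Supermartingale.exists_ae_tendsto_of_ae_bdd [IsFiniteMeasure μ]
    (hf : Supermartingale f 𝓕 μ) {R : ℝ} (hbdd : ∀ n, ∀ᵐ ω ∂μ, |f n ω| ≤ R) :
    ∀ᵐ ω ∂μ, ∃ c, Tendsto (fun n => f n ω) atTop (𝓝 c) := by
  have hL1 : ∀ n, eLpNorm ((-f) n) 1 μ ≤ ((μ Set.univ).toNNReal * R.toNNReal : NNReal) := by
    intro n
    refine (eLpNorm_le_of_ae_nnnorm_bound (C := R.toNNReal) ?_).trans_eq ?_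
    · filter_upwards [hbdd n] with ω hω
      rw [← NNReal.coe_le_coe, coe_nnnorm, Pi.neg_apply, Pi.neg_apply, norm_neg, Real.norm_eq_abs]
      exact hω.trans (R.le_coe_toNNReal)
    · simp [ENNReal.coe_toNNReal (measure_ne_top μ _), mul_comm]
  filter_upwards [hf.neg.exists_ae_tendsto_of_bdd hL1] with ω ⟨c, hc⟩
  exact ⟨-c, by simpa using hc.neg⟩

/-- Fatou's lemma along a nonnegative supermartingale. -/
theorem _root_.MeasureTheory.Supermartingale.mul_measureReal_le_integral [IsFiniteMeasure μ]
    (hf : Supermartingale f 𝓕 μ) (hnn : ∀ n, 0 ≤ᵐ[μ] f n) {s : Set Ω} (hs : MeasurableSet s)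
    {c : ℝ} (hc : 0 ≤ c) (hlim : ∀ᵐ ω ∂μ, ω ∈ s → Tendsto (fun n => f n ω) atTop (𝓝 c)) :
    c * μ.real s ≤ ∫ ω, f 0 ω ∂μ := by
  have hint : ∀ n, ∫⁻ ω, ENNReal.ofReal (f n ω) ∂μ ≤ ENNReal.ofReal (∫ ω, f 0 ω ∂μ) := by
    intro n
    rw [← ofReal_integral_eq_lintegral_ofReal (hf.integrable n) (hnn n)]
    exact ENNReal.ofReal_le_ofReal
      (by simpa using hf.setIntegral_le (Nat.zero_le n) MeasurableSet.univ)
  have key : ENNReal.ofReal c * μ s ≤ ENNReal.ofReal (∫ ω, f 0 ω ∂μ) :=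
    calc ENNReal.ofReal c * μ s
        = ∫⁻ ω in s, ENNReal.ofReal c ∂μ := (setLIntegral_const s _).symm
      _ ≤ ∫⁻ ω in s, liminf (fun n => ENNReal.ofReal (f n ω)) atTop ∂μ := by
          refine setLIntegral_mono_ae' hs ?_
          filter_upwards [hlim] with ω hω hωs
          exact (((ENNReal.continuous_ofReal.tendsto c).comp (hω hωs)).liminf_eq).ge
      _ ≤ ∫⁻ ω, liminf (fun n => ENNReal.ofReal (f n ω)) atTop ∂μ := setLIntegral_le_lintegral _ _
      _ ≤ liminf (fun n => ∫⁻ ω, ENNReal.ofReal (f n ω) ∂μ) atTop :=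
          lintegral_liminf_le fun n => ENNReal.measurable_ofReal.comp
            ((hf.stronglyMeasurable n).measurable.mono (𝓕.le n) le_rfl)
      _ ≤ ENNReal.ofReal (∫ ω, f 0 ω ∂μ) :=
          (liminf_le_liminf (Eventually.of_forall hint)).trans (liminf_const _).le
  have := ENNReal.toReal_mono ENNReal.ofReal_ne_top key
  rwa [ENNReal.toReal_mul, ENNReal.toReal_ofReal hc,
    ENNReal.toReal_ofReal (integral_nonneg_of_ae (hnn 0))] at this

theorem tendsto_integral_min_div_atTop [IsFiniteMeasure μ] {h : Ω → ℝ} (hm : AEMeasurable h μ) (h0 : 0 ≤ᵐ[μ] h) :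
    Tendsto (fun K : ℕ => ∫ ω, min (h ω) K / K ∂μ) atTop (𝓝 0) := by
  have hdom := tendsto_integral_of_dominated_convergence (fun _ => (1 : ℝ))
    (fun K : ℕ => ((hm.min aemeasurable_const).div_const (K : ℝ)).aestronglyMeasurable)
    (integrable_const 1)
    (fun K => by
      filter_upwards [h0] with ω hω
      rw [Real.norm_eq_abs, abs_of_nonneg (div_nonneg (le_min hω K.cast_nonneg) K.cast_nonneg)]
      exact div_le_one_of_le₀ (min_le_right _ _) K.cast_nonneg)
    (by
      filter_upwards [h0] with ω hω
      exact tendsto_of_tendsto_of_tendsto_of_le_of_le tendsto_const_nhds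
        (tendsto_const_div_atTop_nhds_zero_nat (h ω))
        (fun K => div_nonneg (le_min hω K.cast_nonneg) K.cast_nonneg)
        fun K => div_le_div_of_nonneg_right (min_le_left _ _) K.cast_nonneg)
  simpa using hdom

theorem measure_eq_zero_of_forall_mul_le_integral_min [IsFiniteMeasure μ] {s : Set Ω}
    {h : Ω → ℝ} (hm : AEMeasurable h μ) (h0 : 0 ≤ᵐ[μ] h) (hs : ∀ K : ℕ, K * μ.real s ≤ ∫ ω, min (h ω) K ∂μ) : μ s = 0 := by
  have hle : ∀ᶠ K : ℕ in atTop, μ.real s ≤ ∫ ω, min (h ω) K / K ∂μ :=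
    (eventually_gt_atTop 0).mono fun K hK => by
      rw [integral_div, le_div_iff₀ (Nat.cast_pos.mpr hK), mul_comm]
      exact hs K
  exact (measureReal_eq_zero_iff).mp
    (le_antisymm (ge_of_tendsto (tendsto_integral_min_div_atTop hm h0) hle) measureReal_nonneg)

end Stopping

section Walk

variable {X : ℕ → Ω → ℕ} {C : ℕ → ℕ → Ω → ℝ}

theorem measurable_apply_nat {β : Type*} [MeasurableSpace β] {m : MeasurableSpace Ω}
    {Y : Ω → ℕ} {F : ℕ → Ω → β} (hY : Measurable[m] Y) (hF : ∀ n, Measurable[m] (F n)) :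
    Measurable[m] fun ω => F (Y ω) ω :=
  (measurable_from_prod_countable_left (f := fun p : Ω × ℕ => F p.2 p.1) hF).comp
    (measurable_id.prodMk hY)

theorem measurable_resistance {m : MeasurableSpace Ω} {c : ℕ → Ω → ℝ}
    (hc : ∀ j, Measurable[m] (c j)) (x : ℕ) : Measurable[m] fun ω => resistance (c · ω) x :=
  Finset.measurable_sum _ fun j _ => measurable_const.div (hc j)

noncomputable def stepUpProb (X : ℕ → Ω → ℕ) (C : ℕ → ℕ → Ω → ℝ) (t : ℕ) (ω : Ω) : ℝ :=
  if X t ω = 0 then 1 else C t (X t ω) ω / (C t (X t ω) ω + C t (X t ω - 1) ω)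

structure IsRWCE (μ : Measure Ω) (𝓕 : Filtration ℕ m0) (X : ℕ → Ω → ℕ)
    (C : ℕ → ℕ → Ω → ℝ) : Prop where
  measurable_walk : ∀ t, Measurable[𝓕 t] (X t)
  measurable_conductance : ∀ t j, Measurable[𝓕 t] (C t j)
  conductance_pos : ∀ᵐ ω ∂μ, ∀ t j, 0 < C t j ω
  step : ∀ᵐ ω ∂μ, ∀ t, X (t + 1) ω = X t ω + 1 ∨ X (t + 1) ω + 1 = X t ω
  condExp_stepUp : ∀ t,
    μ[fun ω => if X (t + 1) ω = X t ω + 1 then (1 : ℝ) else 0 | 𝓕 t] =ᵐ[μ] stepUpProb X C t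

def shiftFiltration (𝓕 : Filtration ℕ m0) (T : ℕ) : Filtration ℕ m0 where
  seq n := 𝓕 (T + n)
  mono' _ _ h := 𝓕.mono (Nat.add_le_add_left h T)
  le' _ := 𝓕.le _

theorem IsRWCE.shift (hW : IsRWCE μ 𝓕 X C) (T : ℕ) :
    IsRWCE μ (shiftFiltration 𝓕 T) (fun t => X (T + t)) (fun t => C (T + t)) where
  measurable_walk t := hW.measurable_walk (T + t)
  measurable_conductance t := hW.measurable_conductance (T + t)
  conductance_pos := hW.conductance_pos.mono fun _ h t => h (T + t)
  step := hW.step.mono fun _ h t => h (T + t)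
  condExp_stepUp t := hW.condExp_stepUp (T + t)

theorem IsRWCE.condExp_comp_succ [IsFiniteMeasure μ] (hW : IsRWCE μ 𝓕 X C) (t : ℕ)
    {Φ : ℕ → Ω → ℝ} (hΦ : ∀ x, Measurable[𝓕 t] (Φ x)) {R : ℝ}
    (hR : ∀ᵐ ω ∂μ, ∀ x, |Φ x ω| ≤ R) :
    μ[fun ω => Φ (X (t + 1) ω) ω | 𝓕 t] =ᵐ[μ] fun ω =>
      stepUpProb X C t ω * Φ (X t ω + 1) ω + (1 - stepUpProb X C t ω) * Φ (X t ω - 1) ω := by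
  set Y : Ω → ℝ := fun ω => if X (t + 1) ω = X t ω + 1 then 1 else 0 with hY
  set U : Ω → ℝ := fun ω => Φ (X t ω + 1) ω
  set D : Ω → ℝ := fun ω => Φ (X t ω - 1) ω
  have hXt := hW.measurable_walk t
  have hU : Measurable[𝓕 t] U := measurable_apply_nat (hXt.add_const 1) hΦ
  have hD : Measurable[𝓕 t] D := measurable_apply_nat (hXt.sub_const 1) hΦ
  have hYm : Measurable Y := Measurable.ite
    (measurableSet_eq_fun ((hW.measurable_walk _).mono (𝓕.le _) le_rfl)
      ((hXt.mono (𝓕.le t) le_rfl).add_const 1)) measurable_const measurable_const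
  have hint : ∀ {g : Ω → ℝ} {r : ℝ}, Measurable g → (∀ᵐ ω ∂μ, |g ω| ≤ r) → Integrable g μ :=
    fun hg hr => Integrable.of_bound hg.aestronglyMeasurable _ (by simpa using hr)
  have hY1 : ∀ ω, |Y ω| ≤ 1 := fun ω => by by_cases h : X (t + 1) ω = X t ω + 1 <;> simp [hY, h]
  have hUi := hint (hU.mono (𝓕.le t) le_rfl) (hR.mono fun ω h => h _)
  have hDi := hint (hD.mono (𝓕.le t) le_rfl) (hR.mono fun ω h => h _)
  have hYi := hint hYm (Eventually.of_forall hY1)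
  have hbd : ∀ {g : Ω → ℝ}, (∀ᵐ ω ∂μ, |g ω| ≤ R) → ∀ᵐ ω ∂μ, |(g * Y) ω| ≤ R :=
    fun {g} hg => hg.mono fun ω h => by
      rw [Pi.mul_apply, abs_mul]
      nlinarith [abs_nonneg (g ω), abs_nonneg (Y ω), hY1 ω]
  have hUYi := hint ((hU.mono (𝓕.le t) le_rfl).mul hYm) (hbd (hR.mono fun ω h => h _))
  have hDYi := hint ((hD.mono (𝓕.le t) le_rfl).mul hYm) (hbd (hR.mono fun ω h => h _))
  have hsplit : (fun ω => Φ (X (t + 1) ω) ω) =ᵐ[μ] U * Y + (D - D * Y) := by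
    filter_upwards [hW.step] with ω hω
    rcases hω t with h | h
    · simp [U, D, Y, h]
    · simp [U, D, Y, show X (t + 1) ω = X t ω - 1 by omega]
  have hpull : μ[U * Y + (D - D * Y) | 𝓕 t] =ᵐ[μ] U * μ[Y | 𝓕 t] + (D - D * μ[Y | 𝓕 t]) :=
    (condExp_add hUYi (hDi.sub hDYi) _).trans <| EventuallyEq.add
      (condExp_mul_of_stronglyMeasurable_left hU.stronglyMeasurable hUYi hYi)
      ((condExp_sub hDi hDYi _).trans <| EventuallyEq.sub
        (EventuallyEq.of_eq (condExp_of_stronglyMeasurable (𝓕.le t) hD.stronglyMeasurable hDi))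
        (condExp_mul_of_stronglyMeasurable_left hD.stronglyMeasurable hDYi hYi))
  filter_upwards [condExp_congr_ae hsplit, hpull, hW.condExp_stepUp t] with ω h₁ h₂ h₃
  rw [h₁, h₂]
  simp only [Pi.add_apply, Pi.sub_apply, Pi.mul_apply, hY, h₃]
  ring

noncomputable def truncPotential (X : ℕ → Ω → ℕ) (C : ℕ → ℕ → Ω → ℝ) (K : ℝ) (t : ℕ) (ω : Ω) :
    ℝ :=
  min (resistance (C t · ω) (X t ω)) K

theorem IsRWCE.measurable_truncPotential (hW : IsRWCE μ 𝓕 X C) (K : ℝ) (t : ℕ) :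
    Measurable[𝓕 t] (truncPotential X C K t) :=
  (measurable_apply_nat (hW.measurable_walk t)
    (measurable_resistance (hW.measurable_conductance t))).min measurable_const

theorem IsRWCE.truncPotential_mem_Icc (hW : IsRWCE μ 𝓕 X C) {K : ℝ} (hK : 0 ≤ K) :
    ∀ᵐ ω ∂μ, ∀ t, truncPotential X C K t ω ∈ Set.Icc 0 K :=
  hW.conductance_pos.mono fun _ hω t =>
    ⟨le_min (resistance_nonneg (fun j => (hω t j).le) _) hK, min_le_right _ _⟩

theorem IsRWCE.integrable_truncPotential [IsFiniteMeasure μ] (hW : IsRWCE μ 𝓕 X C) {K : ℝ}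
    (hK : 0 ≤ K) (t : ℕ) : Integrable (truncPotential X C K t) μ :=
  Integrable.of_bound ((hW.measurable_truncPotential K t).mono (𝓕.le t) le_rfl).aestronglyMeasurable
    K ((hW.truncPotential_mem_Icc hK).mono fun _ h => by
      rw [Real.norm_eq_abs, abs_le]; exact ⟨by linarith [(h t).1], (h t).2⟩)

/-- Away from `0` the capped potential is a supermartingale: the resistance is harmonic for
the current environment, capping is concave, and increasing conductances only lower it. -/
theorem IsRWCE.condExp_truncPotential_succ_le [IsFiniteMeasure μ] (hW : IsRWCE μ 𝓕 X C)
    (hmono : ∀ᵐ ω ∂μ, ∀ t j, C t j ω ≤ C (t + 1) j ω) {K : ℝ} (hK : 0 ≤ K) (t : ℕ) :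
    ∀ᵐ ω ∂μ, X t ω ≠ 0 →
      μ[truncPotential X C K (t + 1) | 𝓕 t] ω ≤ truncPotential X C K t ω := by
  set Φ : ℕ → Ω → ℝ := fun x ω => min (resistance (C t · ω) x) K
  have hΦ : ∀ x, Measurable[𝓕 t] (Φ x) := fun x =>
    (measurable_resistance (hW.measurable_conductance t) x).min measurable_const
  have hΦR : ∀ᵐ ω ∂μ, ∀ x, |Φ x ω| ≤ K := hW.conductance_pos.mono fun ω hω x => by
    rw [abs_of_nonneg (le_min (resistance_nonneg (fun j => (hω t j).le) x) hK)]
    exact min_le_right _ _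
  have hΦi : Integrable (fun ω => Φ (X (t + 1) ω) ω) μ :=
    Integrable.of_bound ((measurable_apply_nat (hW.measurable_walk (t + 1))
      fun x => (hΦ x).mono (𝓕.mono t.le_succ) le_rfl).mono (𝓕.le _) le_rfl).aestronglyMeasurable
      K (hΦR.mono fun ω h => h _)
  have hle : truncPotential X C K (t + 1) ≤ᵐ[μ] fun ω => Φ (X (t + 1) ω) ω := by
    filter_upwards [hW.conductance_pos, hmono] with ω hpos hω
    exact min_le_min_right _ (resistance_le_of_le (hpos t) (hω t) _)
  filter_upwards [condExp_mono (hW.integrable_truncPotential hK _) hΦi hle,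
    hW.condExp_comp_succ t hΦ hΦR, hW.conductance_pos] with ω h₁ h₂ hpos hx
  have hsum : 0 < C t (X t ω) ω + C t (X t ω - 1) ω := add_pos (hpos t _) (hpos t _)
  have hp : stepUpProb X C t ω = C t (X t ω) ω / (C t (X t ω) ω + C t (X t ω - 1) ω) :=
    if_neg hx
  calc μ[truncPotential X C K (t + 1) | 𝓕 t] ω
      ≤ stepUpProb X C t ω * Φ (X t ω + 1) ω + (1 - stepUpProb X C t ω) * Φ (X t ω - 1) ω :=
        h₁.trans_eq h₂
    _ ≤ truncPotential X C K t ω := by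
        rw [hp]
        refine (convex_comb_min_le (div_nonneg (hpos t _).le hsum.le)
          ((div_le_one hsum).mpr (by linarith [hpos t (X t ω - 1)]))).trans_eq ?_
        rw [resistance_harmonic (hpos t) hx]
        rfl

noncomputable def stoppedPotential (X : ℕ → Ω → ℕ) (C : ℕ → ℕ → Ω → ℝ) (K : ℝ) :
    ℕ → Ω → ℝ :=
  stopOnExit (truncPotential X C K) fun n => {ω | ∀ k ≤ n, X k ω ≠ 0}

theorem antitone_setOf_forall_le_ne_zero :
    Antitone fun n => {ω | ∀ k ≤ n, X k ω ≠ 0} :=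
  fun _ _ hmn _ hω k hk => hω k (hk.trans hmn)

theorem stoppedPotential_eq {K : ℝ} {ω : Ω} (hω : ∀ t, X t ω ≠ 0) (n : ℕ) :
    stoppedPotential X C K n ω = truncPotential X C K n ω :=
  stopOnExit_eq_of_mem antitone_setOf_forall_le_ne_zero fun k _ => hω k

theorem IsRWCE.stoppedPotential_mem_Icc (hW : IsRWCE μ 𝓕 X C) {K : ℝ} (hK : 0 ≤ K) :
    ∀ᵐ ω ∂μ, ∀ n, stoppedPotential X C K n ω ∈ Set.Icc 0 K :=
  (hW.truncPotential_mem_Icc hK).mono fun _ h => stopOnExit_mem h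

theorem IsRWCE.supermartingale_stoppedPotential [IsFiniteMeasure μ] (hW : IsRWCE μ 𝓕 X C)
    (hmono : ∀ᵐ ω ∂μ, ∀ t j, C t j ω ≤ C (t + 1) j ω) {K : ℝ} (hK : 0 ≤ K) :
    Supermartingale (stoppedPotential X C K) 𝓕 μ :=
  supermartingale_stopOnExit (hW.measurable_truncPotential K)
    (hW.integrable_truncPotential hK)
    (fun n => by
      simp_rw [Set.ofPred_forall]
      exact .iInter fun k => .iInter fun hk =>
        ((hW.measurable_walk k).mono (𝓕.mono hk) le_rfl) (measurableSet_singleton 0).compl)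
    antitone_setOf_forall_le_ne_zero
    fun n => (hW.condExp_truncPotential_succ_le hmono hK n).mono fun _ h hω => h (hω n le_rfl)

/-- Convergence of the stopped potentials for every cap `K` forces a walk avoiding `0` to
infinity. -/
theorem IsRWCE.ae_tendsto_stoppedPotential [IsFiniteMeasure μ] (hW : IsRWCE μ 𝓕 X C)
    (hmono : ∀ᵐ ω ∂μ, ∀ t j, C t j ω ≤ C (t + 1) j ω) {Cinf : ℕ → ℝ}
    (hbound : ∀ᵐ ω ∂μ, ∀ t j, C t j ω ≤ Cinf j) (hrec : ¬ Summable fun j => 1 / Cinf j) :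
    ∀ᵐ ω ∂μ, (∀ t, X t ω ≠ 0) →
      ∀ K : ℕ, Tendsto (fun n => stoppedPotential X C K n ω) atTop (𝓝 K) := by
  have hconv : ∀ᵐ ω ∂μ, ∀ K : ℕ, ∃ a, Tendsto (fun n => stoppedPotential X C K n ω) atTop (𝓝 a) :=
    ae_all_iff.2 fun K => (hW.supermartingale_stoppedPotential hmono K.cast_nonneg)
      |>.exists_ae_tendsto_of_ae_bdd (R := K) fun n =>
        (hW.stoppedPotential_mem_Icc K.cast_nonneg).mono fun ω h =>
          abs_le.2 ⟨by linarith [(h n).1], (h n).2⟩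
  filter_upwards [hconv, hW.conductance_pos, hmono, hbound, hW.step] with ω hω hpos hm hb hs h0
  simp only [stoppedPotential_eq h0] at hω ⊢
  exact tendsto_min_resistance_of_forall_exists_tendsto (c := (C · · ω)) hpos hm hb hrec hs hω

theorem IsRWCE.ae_exists_eq_zero [IsFiniteMeasure μ] (hW : IsRWCE μ 𝓕 X C)
    (hmono : ∀ᵐ ω ∂μ, ∀ t j, C t j ω ≤ C (t + 1) j ω) {Cinf : ℕ → ℝ}
    (hbound : ∀ᵐ ω ∂μ, ∀ t j, C t j ω ≤ Cinf j) (hrec : ¬ Summable fun j => 1 / Cinf j) :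
    ∀ᵐ ω ∂μ, ∃ t, X t ω = 0 := by
  have hE : MeasurableSet {ω | ∀ t, X t ω ≠ 0} := by
    simp_rw [Set.ofPred_forall]
    exact .iInter fun t =>
      ((hW.measurable_walk t).mono (𝓕.le t) le_rfl) (measurableSet_singleton 0).compl
  have hlim := hW.ae_tendsto_stoppedPotential hmono hbound hrec
  rw [ae_iff]
  simp only [not_exists]
  refine measure_eq_zero_of_forall_mul_le_integral_min
    (((measurable_apply_nat (hW.measurable_walk 0)
      (measurable_resistance (hW.measurable_conductance 0))).mono (𝓕.le 0) le_rfl).aemeasurable)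
    (hW.conductance_pos.mono fun ω hω => resistance_nonneg (fun j => (hω 0 j).le) _) fun K => ?_
  exact (hW.supermartingale_stoppedPotential hmono K.cast_nonneg).mul_measureReal_le_integral
    (fun n => (hW.stoppedPotential_mem_Icc K.cast_nonneg).mono fun ω h => (h n).1) hE
    K.cast_nonneg (hlim.mono fun ω h hω => h hω K)

end Walk

end RWCE

theorem rwce_increasing_recurrent_general
    {Ω : Type*} {m0 : MeasurableSpace Ω} {μ : Measure Ω} [IsProbabilityMeasure μ]
    (𝓕 : Filtration ℕ m0)
    (X : ℕ → Ω → ℕ) (C : ℕ → ℕ → Ω → ℝ)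
    (hXadp : ∀ t, Measurable[𝓕 t] (X t))
    (hCadp : ∀ t j, Measurable[𝓕 t] (C t j))
    (hCpos : ∀ᵐ ω ∂μ, ∀ t j, 0 < C t j ω)
    (hmono : ∀ᵐ ω ∂μ, ∀ t j, C t j ω ≤ C (t + 1) j ω)
    (Cinf : ℕ → ℝ)
    (hbound : ∀ᵐ ω ∂μ, ∀ t j, C t j ω ≤ Cinf j)
    (hrec : ¬ Summable (fun j => 1 / Cinf j))
    (hnn : ∀ᵐ ω ∂μ, ∀ t, X (t + 1) ω = X t ω + 1 ∨ X (t + 1) ω + 1 = X t ω)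
    (hstep : ∀ t,
      μ[(fun ω => if X (t + 1) ω = X t ω + 1 then (1 : ℝ) else 0) | 𝓕 t]
        =ᵐ[μ] fun ω => if X t ω = 0 then 1
          else C t (X t ω) ω / (C t (X t ω) ω + C t (X t ω - 1) ω)) :
    ∀ᵐ ω ∂μ, {t | X t ω = 0}.Infinite := by
  have hW : RWCE.IsRWCE μ 𝓕 X C := ⟨hXadp, hCadp, hCpos, hnn, hstep⟩
  have hreturn : ∀ᵐ ω ∂μ, ∀ T, ∃ t, X (T + t) ω = 0 :=
    ae_all_iff.2 fun T => (hW.shift T).ae_exists_eq_zero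
      (hmono.mono fun _ h t => h (T + t)) (hbound.mono fun _ h t => h (T + t)) hrec
  filter_upwards [hreturn] with ω hω
  rw [← Nat.frequently_atTop_iff_infinite, frequently_atTop]
  intro T
  obtain ⟨t, ht⟩ := hω T
  exact ⟨T + t, Nat.le_add_right T t, ht⟩

/-- **RWCE on ℕ, monotone increasing, bounded above by a recurrent network.**
A random walk in changing environment on ℕ: `X t` is the walker, `C t j` is the
(history-dependent) conductance of the edge `(j, j+1)` at time `t`.  The environment
is monotone increasing and bounded above by a fixed network `C∞` which is recurrent
(`∑ 1/C∞(j) = ∞`).  Then the walk visits `0` infinitely often almost surely. -/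
theorem rwce_increasing_recurrent
    {Ω : Type*} {m0 : MeasurableSpace Ω} {μ : Measure Ω} [IsProbabilityMeasure μ]
    (𝓕 : Filtration ℕ m0)
    (X : ℕ → Ω → ℕ) (C : ℕ → ℕ → Ω → ℝ)
    (hXadp : ∀ t, Measurable[𝓕 t] (X t))
    (hCadp : ∀ t j, Measurable[𝓕 t] (C t j))
    (hCpos : ∀ᵐ ω ∂μ, ∀ t j, 0 < C t j ω)
    (hmono : ∀ᵐ ω ∂μ, ∀ t j, C t j ω ≤ C (t + 1) j ω)
    (Cinf : ℕ → ℝ) (hCinfpos : ∀ j, 0 < Cinf j)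
    (hbound : ∀ᵐ ω ∂μ, ∀ t j, C t j ω ≤ Cinf j)
    (hrec : ¬ Summable (fun j => 1 / Cinf j))
    (hnn : ∀ᵐ ω ∂μ, ∀ t, X (t + 1) ω = X t ω + 1 ∨ X (t + 1) ω + 1 = X t ω)
    (hstep : ∀ t,
      μ[(fun ω => if X (t + 1) ω = X t ω + 1 then (1 : ℝ) else 0) | 𝓕 t]
        =ᵐ[μ] fun ω => if X t ω = 0 then 1
          else C t (X t ω) ω / (C t (X t ω) ω + C t (X t ω - 1) ω)) :
    ∀ᵐ ω ∂μ, {t | X t ω = 0}.Infinite :=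
  rwce_increasing_recurrent_general 𝓕 X C hXadp hCadp hCpos hmono Cinf hbound hrec hnn hstep
end

section
/- Consider a monotone decreasing adaptive RWCE on ℕ (C_{t+1} ≤ C_t a.s.) whose conductances are bounded below by a transient network C_∞ (∑_j 1/C_∞(j) < ∞). Then the walk is transient: it visits every vertex only finitely many times almost surely. -/
open MeasureTheory Filter Topology

/-!
The resistance from `0` to the walker in the current network, `G t = ∑_{j < X t} 1 / C t j`, is a
bounded submartingale: with the conductances frozen it is harmonic off `0` for the walk, and
decreasing conductances can only increase it. So `G t` converges almost surely. The total
resistance `∑_j 1 / C t j` converges as well, being increasing and bounded by `∑_j 1 / C∞ j`.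
An up-step from `v` raises `G` by at least `1 / C 0 v`, and a down-step from `v + 1` lowers it by
at least `1 / C 0 v` minus the increment of the total resistance. As all these increments tend
to `0`, the walk eventually never leaves `v`, hence eventually never visits `v`.
-/

lemma tendsto_sub_succ_nhds_zero {u : ℕ → ℝ} {L : ℝ} (hu : Tendsto u atTop (𝓝 L)) :
    Tendsto (fun t => u (t + 1) - u t) atTop (𝓝 0) := by
  simpa using (hu.comp (tendsto_add_atTop_nat 1)).sub hu

section NondecreasingResistances

variable {r : ℕ → ℕ → ℝ} {ρ : ℕ → ℝ}

lemma le_sum_range_succ_sub_sum_range (hr : ∀ j, Monotone (r · j)) (t w : ℕ) :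
    r 0 w ≤ ∑ j ∈ Finset.range (w + 1), r (t + 1) j - ∑ j ∈ Finset.range w, r t j := by
  have hsum : ∑ j ∈ Finset.range w, r t j ≤ ∑ j ∈ Finset.range w, r (t + 1) j :=
    Finset.sum_le_sum fun j _ => hr j t.le_succ
  have hw : r 0 w ≤ r (t + 1) w := hr w (Nat.zero_le _)
  rw [Finset.sum_range_succ]
  linarith

lemma summable_of_le_summable (hr₀ : ∀ j, 0 ≤ r 0 j) (hr : ∀ j, Monotone (r · j))
    (hrρ : ∀ t j, r t j ≤ ρ j) (hρ : Summable ρ) (t : ℕ) : Summable (r t) :=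
  hρ.of_nonneg_of_le (fun j => (hr₀ j).trans (hr j (Nat.zero_le t))) (hrρ t)

lemma sum_range_sub_sum_range_succ_le (hr₀ : ∀ j, 0 ≤ r 0 j) (hr : ∀ j, Monotone (r · j))
    (hrρ : ∀ t j, r t j ≤ ρ j) (hρ : Summable ρ) (t w : ℕ) :
    ∑ j ∈ Finset.range w, r (t + 1) j - ∑ j ∈ Finset.range (w + 1), r t j ≤
      (∑' j, r (t + 1) j - ∑' j, r t j) - r 0 w := by
  have hs := summable_of_le_summable hr₀ hr hrρ hρ
  have hsum : ∑ j ∈ Finset.range w, (r (t + 1) j - r t j) ≤ ∑' j, (r (t + 1) j - r t j) :=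
    ((hs (t + 1)).sub (hs t)).sum_le_tsum _ fun j _ => sub_nonneg.2 (hr j t.le_succ)
  have hw : r 0 w ≤ r t w := hr w (Nat.zero_le _)
  rw [Finset.sum_range_succ]
  rw [Finset.sum_sub_distrib, (hs (t + 1)).tsum_sub (hs t)] at hsum
  linarith

lemma tendsto_tsum_succ_sub_tsum (hr₀ : ∀ j, 0 ≤ r 0 j) (hr : ∀ j, Monotone (r · j))
    (hrρ : ∀ t j, r t j ≤ ρ j) (hρ : Summable ρ) :
    Tendsto (fun t => ∑' j, r (t + 1) j - ∑' j, r t j) atTop (𝓝 0) := by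
  have hs := summable_of_le_summable hr₀ hr hrρ hρ
  have hmono : Monotone fun t => ∑' j, r t j :=
    fun s t hst => (hs s).tsum_le_tsum (fun j => hr j hst) (hs t)
  have hbdd : BddAbove (Set.range fun t => ∑' j, r t j) :=
    ⟨∑' j, ρ j, Set.forall_mem_range.2 fun t => (hs t).tsum_le_tsum (hrρ t) hρ⟩
  exact tendsto_sub_succ_nhds_zero (tendsto_atTop_ciSup hmono hbdd)

theorem finite_setOf_eq_of_tendsto_sum_range (hr₀ : ∀ j, 0 < r 0 j) (hr : ∀ j, Monotone (r · j))
    (hrρ : ∀ t j, r t j ≤ ρ j) (hρ : Summable ρ) {x : ℕ → ℕ}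
    (hx : ∀ t, x (t + 1) = x t + 1 ∨ x (t + 1) + 1 = x t) {L : ℝ}
    (hG : Tendsto (fun t => ∑ j ∈ Finset.range (x t), r t j) atTop (𝓝 L)) (v : ℕ) :
    {t | x t = v}.Finite := by
  have hdG := tendsto_sub_succ_nhds_zero hG
  have hup : ∀ᶠ t in atTop, x t = v → x (t + 1) ≠ v + 1 := by
    filter_upwards [hdG.eventually_lt_const (hr₀ v)] with t ht hv hv'
    have := le_sum_range_succ_sub_sum_range hr t v
    simp only [hv, hv'] at ht
    linarith
  have hdown : ∀ᶠ t in atTop, x t = v → x (t + 1) + 1 ≠ v := by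
    obtain _ | w := v
    · exact Eventually.of_forall fun t _ => by omega
    have hdh := tendsto_tsum_succ_sub_tsum (fun j => (hr₀ j).le) hr hrρ hρ
    have hlim := (hdG.sub hdh).eventually_const_lt (u := -r 0 w) (by simpa using hr₀ w)
    filter_upwards [hlim] with t ht hv hv'
    have := sum_range_sub_sum_range_succ_le (fun j => (hr₀ j).le) hr hrρ hρ t w
    simp only [hv, show x (t + 1) = w by omega] at ht
    linarith
  have hnever : ∀ᶠ t in cofinite, x t ≠ v := by
    rw [Nat.cofinite_eq_atTop]
    filter_upwards [hup, hdown] with t hup hdown hv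
    rcases hx t with h | h
    exacts [hup hv (by omega), hdown hv (by omega)]
  simpa using hnever

end NondecreasingResistances

/-- `c j` is the conductance of the edge `{j, j + 1}`. -/
noncomputable def resistance (c : ℕ → ℝ) (n : ℕ) : ℝ := ∑ j ∈ Finset.range n, (c j)⁻¹

lemma resistance_succ (c : ℕ → ℝ) (n : ℕ) : resistance c (n + 1) = resistance c n + (c n)⁻¹ :=
  Finset.sum_range_succ _ _

lemma resistance_le_resistance {c c' : ℕ → ℝ} (hc' : ∀ j, 0 < c' j) (h : ∀ j, c' j ≤ c j)
    (n : ℕ) : resistance c n ≤ resistance c' n :=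
  Finset.sum_le_sum fun j _ => inv_anti₀ (hc' j) (h j)

lemma resistance_mem_Icc {c Cinf : ℕ → ℝ} (hCinf : ∀ j, 0 < Cinf j) (hc : ∀ j, Cinf j ≤ c j)
    (hs : Summable fun j => (Cinf j)⁻¹) (n : ℕ) :
    resistance c n ∈ Set.Icc 0 (∑' j, (Cinf j)⁻¹) :=
  ⟨Finset.sum_nonneg fun j _ => inv_nonneg.2 ((hCinf j).le.trans (hc j)),
    (resistance_le_resistance hCinf hc n).trans <|
      hs.sum_le_tsum _ fun j _ => inv_nonneg.2 (hCinf j).le⟩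

lemma norm_resistance_le {c Cinf : ℕ → ℝ} (hCinf : ∀ j, 0 < Cinf j) (hc : ∀ j, Cinf j ≤ c j)
    (hs : Summable fun j => (Cinf j)⁻¹) (n : ℕ) : ‖resistance c n‖ ≤ ∑' j, (Cinf j)⁻¹ :=
  have h := resistance_mem_Icc hCinf hc hs n
  (Real.norm_of_nonneg h.1).trans_le h.2

/-- With `c` frozen, `resistance c` is harmonic off `0` for the walk stepping up from `x`
with probability `c x / (c x + c (x - 1))`; at `0` it can only increase. -/
lemma resistance_sub_pred_le {c : ℕ → ℝ} (hc : ∀ j, 0 < c j) (x : ℕ) :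
    resistance c x - resistance c (x - 1) ≤
      (resistance c (x + 1) - resistance c (x - 1)) *
        (if x = 0 then 1 else c x / (c x + c (x - 1))) := by
  obtain _ | k := x
  · simpa [resistance_succ] using (hc 0).le
  have hk := hc k
  have hk' := hc (k + 1)
  have hstep : resistance c (k + 1) - resistance c k = (c k)⁻¹ := by
    rw [resistance_succ]; ring
  have hedge : resistance c (k + 1 + 1) - resistance c k = (c (k + 1))⁻¹ + (c k)⁻¹ := by
    rw [resistance_succ, resistance_succ]; ring
  simp only [Nat.add_sub_cancel, Nat.add_one_ne_zero, if_false, hstep, hedge]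
  refine le_of_eq ?_
  field_simp
  ring

-- `f` at the next position of a nearest-neighbour step, as present-known coefficients
-- times the up-step indicator.
lemma eq_add_mul_ite_sub {f : ℕ → ℝ} {x x' : ℕ} (h : x' = x + 1 ∨ x' + 1 = x) :
    f x' = f x + (f (x + 1) - f (x - 1)) * (if x' = x + 1 then 1 else 0) - (f x - f (x - 1)) := by
  rcases h with rfl | rfl
  · simp
  · simp [(Nat.lt_succ_of_lt x'.lt_succ_self).ne]

lemma Measurable.apply_of_countable_index {Ω ι β : Type*} {m : MeasurableSpace Ω}
    [MeasurableSpace ι] [Countable ι] [MeasurableSingletonClass ι] [MeasurableSpace β]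
    {f : ι → Ω → β} (hf : ∀ i, Measurable (f i)) {x : Ω → ι} (hx : Measurable x) :
    Measurable fun ω => f (x ω) ω :=
  (measurable_from_prod_countable_left (f := fun q : Ω × ι => f q.2 q.1) hf).comp
    (measurable_id.prodMk hx)

lemma measurable_resistance {Ω : Type*} {m : MeasurableSpace Ω} {c : ℕ → Ω → ℝ}
    (hc : ∀ j, Measurable (c j)) {x : Ω → ℕ} (hx : Measurable x) :
    Measurable fun ω => resistance (c · ω) (x ω) :=
  Measurable.apply_of_countable_index
    (fun _ => Finset.measurable_sum _ fun j _ => (hc j).inv) hx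

lemma ae_le_condExp_of_le_add_mul_sub {Ω : Type*} {m m0 : MeasurableSpace Ω} {μ : Measure Ω}
    [IsFiniteMeasure μ] (hm : m ≤ m0) {g A B I p Y : Ω → ℝ} {K : ℝ}
    (hg : StronglyMeasurable[m] g) (hgi : Integrable g μ)
    (hA : StronglyMeasurable[m] A) (hAK : ∀ᵐ ω ∂μ, ‖A ω‖ ≤ K)
    (hB : StronglyMeasurable[m] B) (hBi : Integrable B μ)
    (hI : Integrable I μ) (hIp : μ[I | m] =ᵐ[μ] p)
    (hY : Integrable Y μ) (hgY : g + A * I - B ≤ᵐ[μ] Y) (hdrift : B ≤ᵐ[μ] A * p) :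
    g ≤ᵐ[μ] μ[Y | m] := by
  have hAI : Integrable (A * I) μ := hI.bdd_mul (hA.mono hm).aestronglyMeasurable hAK
  have hcond : μ[g + A * I - B | m] =ᵐ[μ] g + A * p - B := by
    filter_upwards [condExp_sub (hgi.add hAI) hBi m, condExp_add hgi hAI m,
      condExp_stronglyMeasurable_mul_of_bound hm hA hI K hAK, hIp] with ω hsub hadd hmul hIpω
    simp only [Pi.add_apply, Pi.sub_apply, Pi.mul_apply] at hsub hadd hmul ⊢
    rw [hsub, hadd, hmul, hIpω, condExp_of_stronglyMeasurable hm hg hgi,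
      condExp_of_stronglyMeasurable hm hB hBi]
  calc g ≤ᵐ[μ] g + A * p - B := hdrift.mono fun ω (h : B ω ≤ A ω * p ω) =>
      show g ω ≤ g ω + A ω * p ω - B ω by linarith
    _ =ᵐ[μ] μ[g + A * I - B | m] := hcond.symm
    _ ≤ᵐ[μ] μ[Y | m] := condExp_mono ((hgi.add hAI).sub hBi) hY hgY

theorem submartingale_resistance {Ω : Type*} {m0 : MeasurableSpace Ω} {μ : Measure Ω}
    [IsFiniteMeasure μ] (𝓕 : Filtration ℕ m0) {X : ℕ → Ω → ℕ} {C : ℕ → ℕ → Ω → ℝ}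
    (hXadp : ∀ t, Measurable[𝓕 t] (X t)) (hCadp : ∀ t j, Measurable[𝓕 t] (C t j))
    (hmono : ∀ᵐ ω ∂μ, ∀ t j, C (t + 1) j ω ≤ C t j ω)
    {Cinf : ℕ → ℝ} (hCinfpos : ∀ j, 0 < Cinf j) (hbound : ∀ᵐ ω ∂μ, ∀ t j, Cinf j ≤ C t j ω)
    (htrans : Summable fun j => (Cinf j)⁻¹)
    (hnn : ∀ᵐ ω ∂μ, ∀ t, X (t + 1) ω = X t ω + 1 ∨ X (t + 1) ω + 1 = X t ω)
    (hstep : ∀ t,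
      μ[(fun ω => if X (t + 1) ω = X t ω + 1 then (1 : ℝ) else 0) | 𝓕 t]
        =ᵐ[μ] fun ω => if X t ω = 0 then 1
          else C t (X t ω) ω / (C t (X t ω) ω + C t (X t ω - 1) ω)) :
    Submartingale (fun t ω => resistance (C t · ω) (X t ω)) 𝓕 μ := by
  set K := ∑' j, (Cinf j)⁻¹
  have hRK : ∀ᵐ ω ∂μ, ∀ t n, resistance (C t · ω) n ∈ Set.Icc 0 K :=
    hbound.mono fun ω hω t => resistance_mem_Icc hCinfpos (hω t) htrans
  have hRmeas : ∀ t {Y : Ω → ℕ}, Measurable[𝓕 t] Y →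
      Measurable[𝓕 t] fun ω => resistance (C t · ω) (Y ω) :=
    fun t _ hY => measurable_resistance (hCadp t) hY
  have hRint : ∀ t {Y : Ω → ℕ}, Measurable[𝓕 t] Y →
      Integrable (fun ω => resistance (C t · ω) (Y ω)) μ := fun t Y hY =>
    .of_bound ((hRmeas t hY).mono (𝓕.le t) le_rfl).aestronglyMeasurable K <|
      hbound.mono fun ω hω => norm_resistance_le hCinfpos (hω t) htrans (Y ω)
  refine submartingale_nat (fun t => (hRmeas t (hXadp t)).stronglyMeasurable)
    (fun t => hRint t (hXadp t)) fun t => ?_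
  have hsucc : Measurable[𝓕 t] fun ω => X t ω + 1 :=
    (Measurable.of_discrete (f := (· + 1))).comp (hXadp t)
  have hpred : Measurable[𝓕 t] fun ω => X t ω - 1 :=
    (Measurable.of_discrete (f := (· - 1))).comp (hXadp t)
  have hI : Integrable (fun ω => if X (t + 1) ω = X t ω + 1 then (1 : ℝ) else 0) μ := by
    refine .of_bound (Measurable.ite ?_ measurable_const measurable_const).aestronglyMeasurable 1
      (ae_of_all _ fun ω => by split_ifs <;> simp)
    exact measurableSet_eq_fun ((hXadp (t + 1)).mono (𝓕.le _) le_rfl)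
      (hsucc.mono (𝓕.le _) le_rfl)
  refine ae_le_condExp_of_le_add_mul_sub (𝓕.le t) (K := K)
    (hRmeas t (hXadp t)).stronglyMeasurable (hRint t (hXadp t))
    ((hRmeas t hsucc).sub (hRmeas t hpred)).stronglyMeasurable ?_
    ((hRmeas t (hXadp t)).sub (hRmeas t hpred)).stronglyMeasurable
    ((hRint t (hXadp t)).sub (hRint t hpred)) hI (hstep t) (hRint (t + 1) (hXadp (t + 1))) ?_ ?_
  · filter_upwards [hRK] with ω h
    simpa [← dist_eq_norm] using Real.dist_le_of_mem_Icc (h t _) (h t _)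
  · filter_upwards [hmono, hbound, hnn] with ω hmo hb hn
    exact (eq_add_mul_ite_sub (hn t)).symm.le.trans <|
      resistance_le_resistance (fun j => (hCinfpos j).trans_le (hb (t + 1) j)) (hmo t) _
  · filter_upwards [hbound] with ω hb
    exact resistance_sub_pred_le (fun j => (hCinfpos j).trans_le (hb t j)) (X t ω)

/-- **RWCE on ℕ, monotone decreasing, bounded below by a transient network.**
Then the walk visits every vertex only finitely many times almost surely. -/
theorem rwce_decreasing_transient
    {Ω : Type*} {m0 : MeasurableSpace Ω} {μ : Measure Ω} [IsProbabilityMeasure μ]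
    (𝓕 : Filtration ℕ m0)
    (X : ℕ → Ω → ℕ) (C : ℕ → ℕ → Ω → ℝ)
    (hXadp : ∀ t, Measurable[𝓕 t] (X t))
    (hCadp : ∀ t j, Measurable[𝓕 t] (C t j))
    (hmono : ∀ᵐ ω ∂μ, ∀ t j, C (t + 1) j ω ≤ C t j ω)
    (Cinf : ℕ → ℝ) (hCinfpos : ∀ j, 0 < Cinf j)
    (hbound : ∀ᵐ ω ∂μ, ∀ t j, Cinf j ≤ C t j ω)
    (htrans : Summable (fun j => 1 / Cinf j))
    (hnn : ∀ᵐ ω ∂μ, ∀ t, X (t + 1) ω = X t ω + 1 ∨ X (t + 1) ω + 1 = X t ω)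
    (hstep : ∀ t,
      μ[(fun ω => if X (t + 1) ω = X t ω + 1 then (1 : ℝ) else 0) | 𝓕 t]
        =ᵐ[μ] fun ω => if X t ω = 0 then 1
          else C t (X t ω) ω / (C t (X t ω) ω + C t (X t ω - 1) ω)) :
    ∀ᵐ ω ∂μ, ∀ v, {t | X t ω = v}.Finite := by
  simp only [one_div] at htrans
  have hsub := submartingale_resistance 𝓕 hXadp hCadp hmono hCinfpos hbound htrans hnn hstep
  have hL1 : ∀ t, eLpNorm (fun ω => resistance (C t · ω) (X t ω)) 1 μ ≤
      (∑' j, (Cinf j)⁻¹).toNNReal := fun t => by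
    refine (eLpNorm_le_of_ae_bound (p := 1) <| hbound.mono fun ω hω =>
      norm_resistance_le hCinfpos (hω t) htrans (X t ω)).trans_eq ?_
    simp [ENNReal.ofReal]
  filter_upwards [hsub.exists_ae_tendsto_of_bdd hL1, hmono, hbound, hnn]
    with ω ⟨L, hL⟩ hmo hb hn
  have hpos : ∀ t j, 0 < C t j ω := fun t j => (hCinfpos j).trans_le (hb t j)
  exact finite_setOf_eq_of_tendsto_sum_range (r := fun t j => (C t j ω)⁻¹)
    (fun j => inv_pos.2 (hpos 0 j))
    (fun j => monotone_nat_of_le_succ fun t => inv_anti₀ (hpos (t + 1) j) (hmo t j))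
    (fun t j => inv_anti₀ (hCinfpos j) (hb t j)) htrans hn hL
end

section
/- Consider the nonadaptive, monotone decreasing RWCE on ℕ with conductances C_t(j) = 2^{-j} for j < t and C_t(j) = 1 for j ≥ t. Then with positive probability the walk moves right at every step (so never returns to 0), and with positive probability the walk returns to 0 infinitely often; hence the walk is of mixed type (neither recurrent nor transient in the a.s. sense). -/
/-!
As long as the walk has moved right at every step it sits at `X t = t`, at the front of the
wave, where it steps right with probability `1 / (1 + 2^{-(t-1)})`; these probabilities have a
positive infinite product. With probability `1/2` the walk is back at `0` at time `2`, and from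
then on it stays strictly behind the front, where every positive site steps right with
probability `1/3`. On the event that the walk avoids `0` from time `N` on, `∫ X_t` would then
decrease by a fixed amount per step while staying nonnegative, so that event is null and the walk
returns to `0` infinitely often.
-/

open MeasureTheory Filter

/-- The decreasing "wave" environment on ℕ: the edge `(j, j+1)` has conductance `2⁻ʲ`
at times `t > j` and conductance `1` at times `t ≤ j`. -/
noncomputable def decWaveCond (t j : ℕ) : ℝ := if j < t then (2 : ℝ)⁻¹ ^ j else 1

theorem measureReal_inter_eq_mul_of_condExp_indicator {Ω : Type*} {m m0 : MeasurableSpace Ω}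
    {μ : Measure Ω} [IsFiniteMeasure μ] (hm : m ≤ m0) {S A : Set Ω} (hS : MeasurableSet S)
    (hA : MeasurableSet[m] A) {c : ℝ} (hc : ∀ᵐ ω ∂μ, ω ∈ A → μ[S.indicator 1 | m] ω = c) :
    μ.real (A ∩ S) = c * μ.real A := calc
  μ.real (A ∩ S) = ∫ ω in A, S.indicator (1 : Ω → ℝ) ω ∂μ := by
    rw [setIntegral_indicator hS, Pi.one_def, setIntegral_const, smul_eq_mul, mul_one]
  _ = ∫ ω in A, μ[S.indicator 1 | m] ω ∂μ :=
    (setIntegral_condExp hm ((integrable_const 1).indicator hS) hA).symm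
  _ = ∫ _ in A, c ∂μ := setIntegral_congr_ae (hm A hA) hc
  _ = c * μ.real A := by rw [setIntegral_const, smul_eq_mul, mul_comm]

theorem nonpos_of_forall_succ_le_sub {F : ℕ → ℝ} {δ : ℝ} (hF : ∀ k, 0 ≤ F k)
    (hstep : ∀ k, F (k + 1) ≤ F k - δ) : δ ≤ 0 := by
  have hiter : ∀ k : ℕ, F k ≤ F 0 - k * δ := by
    intro k
    induction k with
    | zero => simp
    | succ k ih => push_cast; linarith [hstep k]
  by_contra! hδ
  obtain ⟨k, hk⟩ := exists_nat_gt (F 0 / δ)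
  rw [div_lt_iff₀ hδ] at hk
  linarith [hiter k, hF k]

namespace RWCE

variable {Ω : Type*} {m0 : MeasurableSpace Ω} {μ : Measure Ω}
  {𝓕 : Filtration ℕ m0} {X : ℕ → Ω → ℕ} {p : ℕ → ℕ → ℝ}

def rightStep (X : ℕ → Ω → ℕ) (t : ℕ) : Set Ω := {ω | X (t + 1) ω = X t ω + 1}

def rightRun (X : ℕ → Ω → ℕ) (n : ℕ) : Set Ω := ⋂ t < n, rightStep X t

def zeroFreeOn (X : ℕ → Ω → ℕ) (N t : ℕ) : Set Ω := {ω | ∀ s, N ≤ s → s ≤ t → X s ω ≠ 0}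

def IsNearestNeighbour (μ : Measure Ω) (X : ℕ → Ω → ℕ) : Prop :=
  ∀ᵐ ω ∂μ, ∀ t, X (t + 1) ω = X t ω + 1 ∨ X (t + 1) ω + 1 = X t ω

def HasRightStepProb (μ : Measure Ω) (𝓕 : Filtration ℕ m0) (X : ℕ → Ω → ℕ)
    (p : ℕ → ℕ → ℝ) : Prop :=
  ∀ t, μ[(rightStep X t).indicator 1 | 𝓕 t] =ᵐ[μ] fun ω => p t (X t ω)

theorem measurableSet_rightStep (hX : ∀ t, Measurable[𝓕 t] (X t)) (t : ℕ) :
    MeasurableSet[𝓕 (t + 1)] (rightStep X t) :=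
  measurableSet_eq_fun (hX (t + 1))
    ((measurable_from_top (f := (· + 1))).comp ((hX t).mono (𝓕.mono t.le_succ) le_rfl))

theorem measurableSet_rightRun (hX : ∀ t, Measurable[𝓕 t] (X t)) (n : ℕ) :
    MeasurableSet[𝓕 n] (rightRun X n) :=
  .biInter (Set.to_countable _) fun t ht => 𝓕.mono ht _ (measurableSet_rightStep hX t)

theorem measurableSet_zeroFreeOn (hX : ∀ t, Measurable[𝓕 t] (X t)) (N t : ℕ) :
    MeasurableSet[𝓕 t] (zeroFreeOn X N t) := by
  have hiInter : zeroFreeOn X N t = ⋂ s ∈ Set.Icc N t, (X s)⁻¹' {0}ᶜ := by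
    ext ω
    simp [zeroFreeOn]
  rw [hiInter]
  exact .biInter (Set.to_countable _) fun s hs =>
    𝓕.mono hs.2 _ (hX s (measurableSet_singleton 0).compl)

theorem measureReal_inter_rightStep [IsFiniteMeasure μ] (hX : ∀ t, Measurable[𝓕 t] (X t))
    (hp : HasRightStepProb μ 𝓕 X p) {t : ℕ} {A : Set Ω} (hA : MeasurableSet[𝓕 t] A) {c : ℝ}
    (hc : ∀ᵐ ω ∂μ, ω ∈ A → p t (X t ω) = c) :
    μ.real (A ∩ rightStep X t) = c * μ.real A :=
  measureReal_inter_eq_mul_of_condExp_indicator (𝓕.le t)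
    (𝓕.le _ _ (measurableSet_rightStep hX t)) hA <| by
      filter_upwards [hp t, hc] with ω hpω hcω hω using hpω.trans (hcω hω)

theorem rightRun_succ (n : ℕ) : rightRun X (n + 1) = rightRun X n ∩ rightStep X n := by
  ext ω
  simp only [rightRun, Set.mem_iInter, Set.mem_inter_iff, Nat.lt_succ_iff_lt_or_eq]
  exact ⟨fun h => ⟨fun t ht => h t (.inl ht), h n (.inr rfl)⟩,
    fun ⟨h, hn⟩ t ht => ht.elim (h t) fun e => e ▸ hn⟩

theorem eq_of_mem_rightRun (hX0 : ∀ ω, X 0 ω = 0) {n : ℕ} {ω : Ω} (hω : ω ∈ rightRun X n) :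
    X n ω = n := by
  induction n with
  | zero => exact hX0 ω
  | succ n ih =>
    rw [rightRun_succ] at hω
    rw [hω.2, ih hω.1]

theorem measureReal_rightRun [IsProbabilityMeasure μ] (hX : ∀ t, Measurable[𝓕 t] (X t))
    (hX0 : ∀ ω, X 0 ω = 0) (hp : HasRightStepProb μ 𝓕 X p) (n : ℕ) :
    μ.real (rightRun X n) = ∏ t ∈ Finset.range n, p t t := by
  induction n with
  | zero => simp [rightRun]
  | succ n ih =>
    rw [rightRun_succ, Finset.prod_range_succ, ← ih, mul_comm,
      measureReal_inter_rightStep hX hp (measurableSet_rightRun hX n)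
        (.of_forall fun ω hω => by rw [eq_of_mem_rightRun hX0 hω])]

theorem measure_forall_rightStep_pos [IsProbabilityMeasure μ] (hX : ∀ t, Measurable[𝓕 t] (X t))
    (hX0 : ∀ ω, X 0 ω = 0) (hp : HasRightStepProb μ 𝓕 X p) {δ : ℝ} (hδ : 0 < δ)
    (hprod : ∀ n, δ ≤ ∏ t ∈ Finset.range n, p t t) :
    0 < μ {ω | ∀ t, X (t + 1) ω = X t ω + 1} := by
  have hiInter : {ω | ∀ t, X (t + 1) ω = X t ω + 1} = ⋂ n, rightRun X n := by
    ext ω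
    simp only [rightRun, rightStep, Set.mem_ofPred_eq, Set.mem_iInter]
    exact ⟨fun h _ t _ => h t, fun h t => h (t + 1) t t.lt_succ_self⟩
  have hanti : Antitone (rightRun X) := fun _ _ hmn =>
    Set.biInter_mono (fun _ ht => lt_of_lt_of_le ht hmn) fun _ _ => le_rfl
  rw [hiInter, hanti.measure_iInter
    (fun n => (𝓕.le n _ (measurableSet_rightRun hX n)).nullMeasurableSet) ⟨0, by finiteness⟩]
  refine (ENNReal.ofReal_pos.2 hδ).trans_le (le_iInf fun n => ?_)
  rw [ENNReal.ofReal_le_iff_le_toReal (by finiteness), ← measureReal_def,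
    measureReal_rightRun hX hX0 hp]
  exact hprod n

theorem IsNearestNeighbour.ae_le_add_sub (hnn : IsNearestNeighbour μ X) :
    ∀ᵐ ω ∂μ, ∀ s t, s ≤ t → X t ω ≤ X s ω + (t - s) := by
  filter_upwards [hnn] with ω hω s t hst
  induction t, hst using Nat.le_induction with
  | base => omega
  | succ t hst ih => rcases hω t with h | h <;> omega

theorem measure_zero_at_two_pos [IsProbabilityMeasure μ] (hX : ∀ t, Measurable[𝓕 t] (X t))
    (hX0 : ∀ ω, X 0 ω = 0) (hnn : IsNearestNeighbour μ X) (hp : HasRightStepProb μ 𝓕 X p)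
    (h0 : 0 < p 0 0) (h1 : p 1 1 < 1) :
    0 < μ {ω | X 2 ω = 0} := by
  have hleft : rightRun X 1 \ rightRun X 2 ≤ᵐ[μ] {ω | X 2 ω = 0} := by
    filter_upwards [hnn] with ω hω ⟨hω1, hω2⟩
    have hX1 : X 1 ω = 1 := eq_of_mem_rightRun hX0 hω1
    rw [rightRun_succ] at hω2
    have hX2 : X 2 ω + 1 = X 1 ω := (hω 1).resolve_left fun h => hω2 ⟨hω1, h⟩
    show X 2 ω = 0
    omega
  have hpos : 0 < μ.real (rightRun X 1 \ rightRun X 2) := calc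
    0 < p 0 0 - p 0 0 * p 1 1 := by nlinarith
    _ = μ.real (rightRun X 1) - μ.real (rightRun X 2) := by
      simp [measureReal_rightRun hX hX0 hp, Finset.prod_range_succ]
    _ ≤ _ := le_measureReal_sdiff
  exact (pos_iff_ne_zero.2 ((measureReal_ne_zero_iff).1 hpos.ne')).trans_le
    (measure_mono_ae hleft)

theorem integrable_natCast [IsFiniteMeasure μ] (hX : ∀ t, Measurable[𝓕 t] (X t))
    (hX0 : ∀ ω, X 0 ω = 0) (hnn : IsNearestNeighbour μ X) (t : ℕ) :
    Integrable (fun ω => (X t ω : ℝ)) μ := by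
  refine Integrable.of_bound (C := t)
    ((measurable_from_top.comp ((hX t).mono (𝓕.le t) le_rfl)).aestronglyMeasurable) ?_
  filter_upwards [hnn.ae_le_add_sub] with ω hω
  simpa [hX0 ω] using hω 0 t t.zero_le

theorem setIntegral_natCast_succ [IsFiniteMeasure μ] (hX : ∀ t, Measurable[𝓕 t] (X t))
    (hX0 : ∀ ω, X 0 ω = 0) (hnn : IsNearestNeighbour μ X) (hp : HasRightStepProb μ 𝓕 X p)
    {t : ℕ} {A : Set Ω} (hA : MeasurableSet[𝓕 t] A) {c : ℝ}
    (hc : ∀ᵐ ω ∂μ, ω ∈ A → X t ω ≠ 0 ∧ p t (X t ω) = c) :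
    ∫ ω in A, (X (t + 1) ω : ℝ) ∂μ = ∫ ω in A, (X t ω : ℝ) ∂μ - (1 - 2 * c) * μ.real A := by
  have hR : MeasurableSet (rightStep X t) := 𝓕.le _ _ (measurableSet_rightStep hX t)
  have hstep : ∀ᵐ ω ∂μ, ω ∈ A →
      (X (t + 1) ω : ℝ) = (X t ω : ℝ) - 1 + 2 * (rightStep X t).indicator 1 ω := by
    filter_upwards [hnn, hc] with ω hω hcω hωA
    by_cases hright : ω ∈ rightStep X t
    · rw [Set.indicator_of_mem hright, Pi.one_apply, hright]
      push_cast
      ring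
    · have hleft : X (t + 1) ω + 1 = X t ω := (hω t).resolve_left hright
      rw [Set.indicator_of_notMem hright, ← hleft]
      push_cast
      ring
  have hXint := (integrable_natCast hX hX0 hnn t).integrableOn (s := A)
  have hXint' : IntegrableOn (fun ω => (X t ω : ℝ) - 1) A μ := hXint.sub (integrable_const 1)
  have hRint : IntegrableOn (fun ω => 2 * (rightStep X t).indicator (1 : Ω → ℝ) ω) A μ :=
    (((integrable_const 1).indicator hR).const_mul 2).integrableOn
  rw [setIntegral_congr_ae (𝓕.le t A hA) hstep, integral_add hXint' hRint,
    integral_sub hXint (integrable_const 1), integral_const_mul,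
    setIntegral_indicator hR, Pi.one_def, setIntegral_const, setIntegral_const,
    measureReal_inter_rightStep hX hp hA (hc.mono fun ω h hω => (h hω).2), smul_eq_mul,
    smul_eq_mul]
  ring

theorem measure_inter_forall_ne_zero_eq_zero [IsFiniteMeasure μ]
    (hX : ∀ t, Measurable[𝓕 t] (X t)) (hX0 : ∀ ω, X 0 ω = 0) (hnn : IsNearestNeighbour μ X)
    (hp : HasRightStepProb μ 𝓕 X p) {N : ℕ} {B : Set Ω} (hB : MeasurableSet[𝓕 N] B) {c : ℝ}
    (hc : c < 1 / 2) (hpB : ∀ t, N ≤ t → ∀ᵐ ω ∂μ, ω ∈ B → X t ω ≠ 0 → p t (X t ω) = c) :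
    μ (B ∩ {ω | ∀ s, N ≤ s → X s ω ≠ 0}) = 0 := by
  set D := B ∩ {ω | ∀ s, N ≤ s → X s ω ≠ 0}
  set E : ℕ → Set Ω := fun k => B ∩ zeroFreeOn X N (N + k)
  have hE : ∀ k, MeasurableSet[𝓕 (N + k)] (E k) := fun k =>
    (𝓕.mono le_self_add _ hB).inter (measurableSet_zeroFreeOn hX N (N + k))
  have hDE : ∀ k, μ.real D ≤ μ.real (E k) := fun k =>
    measureReal_mono fun ω ⟨hωB, hω⟩ => ⟨hωB, fun s hs _ => hω s hs⟩
  have hdrift : ∀ k, ∫ ω in E (k + 1), (X (N + (k + 1)) ω : ℝ) ∂μ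
      ≤ ∫ ω in E k, (X (N + k) ω : ℝ) ∂μ - (1 - 2 * c) * μ.real D := fun k => calc
    ∫ ω in E (k + 1), (X (N + k + 1) ω : ℝ) ∂μ ≤ ∫ ω in E k, (X (N + k + 1) ω : ℝ) ∂μ :=
      setIntegral_mono_set (integrable_natCast hX hX0 hnn _).integrableOn
        (.of_forall fun ω => Nat.cast_nonneg _)
        (.of_forall fun ω ⟨hωB, hω⟩ => ⟨hωB, fun s hs hsk => hω s hs (by omega)⟩)
    _ = ∫ ω in E k, (X (N + k) ω : ℝ) ∂μ - (1 - 2 * c) * μ.real (E k) := by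
      refine setIntegral_natCast_succ hX hX0 hnn hp (hE k) ?_
      filter_upwards [hpB (N + k) le_self_add] with ω hω ⟨hωB, hω0⟩
      have hne := hω0 (N + k) le_self_add le_rfl
      exact ⟨hne, hω hωB hne⟩
    _ ≤ ∫ ω in E k, (X (N + k) ω : ℝ) ∂μ - (1 - 2 * c) * μ.real D :=
      sub_le_sub_left (mul_le_mul_of_nonneg_left (hDE k) (by linarith)) _
  have hnonpos := nonpos_of_forall_succ_le_sub (F := fun k => ∫ ω in E k, (X (N + k) ω : ℝ) ∂μ)
    (fun k => setIntegral_nonneg (𝓕.le _ _ (hE k)) fun ω _ => Nat.cast_nonneg _) hdrift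
  have hD : μ.real D = 0 :=
    le_antisymm (nonpos_of_mul_nonpos_right hnonpos (by linarith)) measureReal_nonneg
  exact (measureReal_eq_zero_iff).1 hD

theorem ae_infinite_setOf_eq_zero [IsFiniteMeasure μ] (hX : ∀ t, Measurable[𝓕 t] (X t))
    (hX0 : ∀ ω, X 0 ω = 0) (hnn : IsNearestNeighbour μ X) (hp : HasRightStepProb μ 𝓕 X p)
    {N : ℕ} {B : Set Ω} (hB : MeasurableSet[𝓕 N] B) {c : ℝ} (hc : c < 1 / 2)
    (hpB : ∀ t, N ≤ t → ∀ᵐ ω ∂μ, ω ∈ B → X t ω ≠ 0 → p t (X t ω) = c) :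
    ∀ᵐ ω ∂μ, ω ∈ B → {t | X t ω = 0}.Infinite := by
  have hreturn : ∀ n, ∀ᵐ ω ∂μ, ω ∈ B → ∃ s, N + n ≤ s ∧ X s ω = 0 := fun n => by
    have hnull := measure_inter_forall_ne_zero_eq_zero hX hX0 hnn hp (N := N + n)
      (𝓕.mono le_self_add _ hB) hc fun t ht => hpB t (le_of_add_le_left ht)
    filter_upwards [measure_eq_zero_iff_ae_notMem.1 hnull] with ω hω hωB
    by_contra! h
    exact hω ⟨hωB, h⟩
  filter_upwards [ae_all_iff.2 hreturn] with ω hω hωB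
  refine Set.infinite_of_forall_exists_gt fun a => ?_
  obtain ⟨s, hs, h0⟩ := hω (a + 1) hωB
  exact ⟨s, h0, by omega⟩

end RWCE

noncomputable def decWaveRightProb (t x : ℕ) : ℝ :=
  if x = 0 then 1 else decWaveCond t x / (decWaveCond t x + decWaveCond t (x - 1))

theorem decWaveRightProb_of_pos_of_lt {t x : ℕ} (hx : 0 < x) (hxt : x < t) :
    decWaveRightProb t x = 1 / 3 := by
  obtain ⟨y, rfl⟩ : ∃ y, x = y + 1 := ⟨x - 1, by omega⟩
  have hy : y < t := by omega
  simp only [decWaveRightProb, decWaveCond, if_pos hxt, if_pos hy, Nat.add_sub_cancel,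
    Nat.add_one_ne_zero, if_false, pow_succ]
  field_simp
  ring

theorem exp_neg_le_decWaveRightProb_self (t : ℕ) :
    Real.exp (-(2 * (2 : ℝ)⁻¹ ^ t)) ≤ decWaveRightProb t t := by
  rcases t with _ | s
  · simp [decWaveRightProb]
  have hval : decWaveRightProb (s + 1) (s + 1) = 1 / (1 + (2 : ℝ)⁻¹ ^ s) := by
    simp [decWaveRightProb, decWaveCond]
  have hexp : 2 * (2 : ℝ)⁻¹ ^ (s + 1) = (2 : ℝ)⁻¹ ^ s := by ring
  rw [hval, hexp, Real.exp_neg, one_div]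
  exact inv_anti₀ (by positivity) (by linarith [Real.add_one_le_exp ((2 : ℝ)⁻¹ ^ s)])

theorem exp_neg_four_le_prod_decWaveRightProb (n : ℕ) :
    Real.exp (-4) ≤ ∏ t ∈ Finset.range n, decWaveRightProb t t := calc
  Real.exp (-4) ≤ Real.exp (∑ t ∈ Finset.range n, -(2 * (2 : ℝ)⁻¹ ^ t)) := by
    rw [Real.exp_le_exp, Finset.sum_neg_distrib, ← Finset.mul_sum, neg_le_neg_iff]
    linarith [one_div (2 : ℝ) ▸ sum_geometric_two_le n]
  _ = ∏ t ∈ Finset.range n, Real.exp (-(2 * (2 : ℝ)⁻¹ ^ t)) := Real.exp_sum _ _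
  _ ≤ _ := Finset.prod_le_prod (fun _ _ => (Real.exp_pos _).le)
    fun t _ => exp_neg_le_decWaveRightProb_self t

open RWCE

/-- **Example 4.5:** the nonadaptive, monotone decreasing RWCE on ℕ with conductances
`C_t(j) = 2^{-j}` for `j < t` and `1` otherwise, started at `0`, is of mixed type:
with positive probability the walk moves right at every step (so never returns to `0`),
and with positive probability it returns to `0` infinitely often. -/
theorem rwce_decwave_mixed
    {Ω : Type*} {m0 : MeasurableSpace Ω} {μ : Measure Ω} [IsProbabilityMeasure μ]
    (𝓕 : Filtration ℕ m0)
    (X : ℕ → Ω → ℕ)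
    (hXadp : ∀ t, Measurable[𝓕 t] (X t))
    (hX0 : ∀ ω, X 0 ω = 0)
    (hnn : ∀ᵐ ω ∂μ, ∀ t, X (t + 1) ω = X t ω + 1 ∨ X (t + 1) ω + 1 = X t ω)
    (hstep : ∀ t,
      μ[(fun ω => if X (t + 1) ω = X t ω + 1 then (1 : ℝ) else 0) | 𝓕 t]
        =ᵐ[μ] fun ω => if X t ω = 0 then 1
          else decWaveCond t (X t ω) / (decWaveCond t (X t ω) + decWaveCond t (X t ω - 1))) :
    0 < μ {ω | ∀ t, X (t + 1) ω = X t ω + 1} ∧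
    0 < μ {ω | {t | X t ω = 0}.Infinite} := by
  have hp : HasRightStepProb μ 𝓕 X decWaveRightProb := fun t => by
    have hind : (rightStep X t).indicator (1 : Ω → ℝ)
        = fun ω => if X (t + 1) ω = X t ω + 1 then 1 else 0 := by
      ext ω
      simp [rightStep, Set.indicator_apply]
    rw [hind]
    exact hstep t
  refine ⟨measure_forall_rightStep_pos hXadp hX0 hp (Real.exp_pos (-4))
    exp_neg_four_le_prod_decWaveRightProb, ?_⟩
  have hbehind : ∀ t, 2 ≤ t → ∀ᵐ ω ∂μ, ω ∈ {ω | X 2 ω = 0} → X t ω ≠ 0 →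
      decWaveRightProb t (X t ω) = 1 / 3 := fun t ht => by
    filter_upwards [IsNearestNeighbour.ae_le_add_sub hnn] with ω hω h2 h0
    have hXt := hω 2 t ht
    exact decWaveRightProb_of_pos_of_lt (Nat.pos_of_ne_zero h0) (by simp_all; omega)
  have hreturn := ae_infinite_setOf_eq_zero hXadp hX0 hnn hp
    (hXadp 2 (measurableSet_singleton 0)) (by norm_num) hbehind
  exact (measure_zero_at_two_pos hXadp hX0 hnn hp (by simp [decWaveRightProb])
    (by norm_num [decWaveRightProb, decWaveCond])).trans_le (measure_mono_ae hreturn)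
end
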